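/- Let G = ℤ * ℤ/2ℤ with A generating the ℤ factor and V the order-2 generator. For w ∈ G, the subgroup generated by A and w V w^{-1} is all of G if and only if w V w^{-1} = A^n V A^{-n} for some integer n. -/

import Mathlib

/-!
Write `w = Aⁿ u` with `u` a reduced word in the letters `V` and `A^b`, so that
`w V w⁻¹ = Aⁿ (u V u⁻¹) A⁻ⁿ`. If `u` is trivial (or `u = V`) we are done. Otherwise
`y := u V u⁻¹` is a reduced involution `V A^{b₁} ⋯ V A^{bₘ} V` with `m ≥ 1` and all `bᵢ ≠ 0`,
and `V ∉ ⟨A, y⟩` by ping-pong: let `G` act on reduced words; the words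
`A^a y A^{c₁} y ⋯ y A^{cₖ}` with `c₁, …, c_{k-1} ≠ 0` are already reduced as written, and
this set contains `1`, is stable under `A` and `y`, but does not contain `V`.
-/

open Monoid

def zmodPowersHom {M : Type*} [Monoid M] (n : ℕ) [NeZero n] (x : M) (hx : x ^ n = 1) :
    Multiplicative (ZMod n) →* M where
  toFun m := x ^ m.toAdd.val
  map_one' := by simp
  map_mul' m k := by rw [toAdd_mul, ZMod.val_add, ← pow_add, ← pow_eq_pow_mod _ hx]

open scoped Pointwise in
lemma Equiv.Perm.mem_stabilizer_of_mapsTo {α : Type*} {f : Equiv.Perm α} {s : Set α}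
    (hs : Set.MapsTo f s s) (hf : f * f = 1) : f ∈ MulAction.stabilizer (Equiv.Perm α) s := by
  refine MulAction.mem_stabilizer_set.2 fun x => ⟨fun h => ?_, fun h => hs h⟩
  rw [Equiv.Perm.smul_def] at h
  simpa [← Equiv.Perm.mul_apply, hf] using hs h

lemma Subgroup.zpow_mul_mul_zpow_mem_closure_pair {M : Type*} [Group M] (a x : M) (m k : ℤ) :
    a ^ m * x * a ^ k ∈ Subgroup.closure {a, x} :=
  have ha : a ∈ Subgroup.closure {a, x} := Subgroup.subset_closure (Set.mem_insert _ _)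
  mul_mem (mul_mem (zpow_mem ha _) (Subgroup.subset_closure (Set.mem_insert_of_mem _ rfl)))
    (zpow_mem ha _)

namespace IntCoprodZModTwo

open scoped Pointwise

abbrev G := Coprod (Multiplicative ℤ) (Multiplicative (ZMod 2))

/-- `A n` denotes `Aⁿ`. -/
def A (n : ℤ) : G := Coprod.inl (.ofAdd n)

def V : G := Coprod.inr (.ofAdd 1)

lemma A_add (m n : ℤ) : A (m + n) = A m * A n := by simp [A, ofAdd_add]

lemma A_neg (n : ℤ) : A (-n) = (A n)⁻¹ := by simp [A]

lemma A_one_zpow (n : ℤ) : A 1 ^ n = A n := by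
  rw [A, ← map_zpow, ← ofAdd_zsmul, smul_eq_mul, mul_one]; rfl

@[simp] lemma V_mul_V : V * V = 1 := by
  rw [V, ← map_mul, ← ofAdd_add, show (1 + 1 : ZMod 2) = 0 from rfl, ofAdd_zero, map_one]

@[simp] lemma V_mul_V_mul (g : G) : V * (V * g) = g := by rw [← mul_assoc, V_mul_V, one_mul]

@[simp] lemma V_inv : V⁻¹ = V := inv_eq_of_mul_eq_one_right V_mul_V

lemma inr_eq_one_or_eq_V (m : Multiplicative (ZMod 2)) :
    (Coprod.inr m : G) = 1 ∨ Coprod.inr m = V := by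
  obtain h | h : m.toAdd = 0 ∨ m.toAdd = 1 := by generalize m.toAdd = z; decide +revert
  · left; rw [← ofAdd_toAdd m, h, ofAdd_zero, map_one]
  · right; rw [V, ← h, ofAdd_toAdd]

lemma closure_A_V : Subgroup.closure {A 1, V} = ⊤ := by
  rw [eq_top_iff, ← Coprod.closure_range_inl_union_inr, Subgroup.closure_le]
  rintro _ (⟨m, rfl⟩ | ⟨m, rfl⟩)
  · rw [← ofAdd_toAdd m, ← A, ← A_one_zpow m.toAdd]
    exact zpow_mem (Subgroup.subset_closure (Set.mem_insert _ _)) _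
  · rcases inr_eq_one_or_eq_V m with h | h <;> rw [h]
    · exact one_mem _
    · exact Subgroup.subset_closure (Set.mem_insert_of_mem _ rfl)

def vword (l : List ℤ) : G := (l.map fun b => V * A b).prod

@[simp] lemma vword_nil : vword [] = 1 := rfl

@[simp] lemma vword_cons (b : ℤ) (l : List ℤ) : vword (b :: l) = V * A b * vword l := rfl

@[simp] lemma vword_append (l l' : List ℤ) : vword (l ++ l') = vword l * vword l' := by
  simp [vword]

lemma exists_normal_form (g : G) :
    ∃ n p, 0 ∉ p ∧ (g = A n * vword p ∨ g = A n * vword p * V) := by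
  induction g using Coprod.induction_on' with
  | one => exact ⟨0, [], by simp [A]⟩
  | inl_mul m g ih =>
    obtain ⟨n, p, hp, hg⟩ := ih
    refine ⟨m.toAdd + n, p, hp, ?_⟩
    rw [A_add, A, ofAdd_toAdd]
    rcases hg with rfl | rfl <;> simp [mul_assoc]
  | inr_mul m g ih =>
    obtain ⟨n, p, hp, hg⟩ := ih
    rcases inr_eq_one_or_eq_V m with h | h <;> rw [h]
    · exact ⟨n, p, hp, by simpa using hg⟩
    by_cases hn : n = 0
    · subst hn
      cases p with
      | nil => exact ⟨0, [], by simp, by rcases hg with rfl | rfl <;> simp [A]⟩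
      | cons b p =>
        refine ⟨b, p, fun h => hp (List.mem_cons_of_mem _ h), ?_⟩
        rcases hg with rfl | rfl <;> simp [A, ← mul_assoc]
    · refine ⟨0, n :: p, by simp [Ne.symm hn, hp], ?_⟩
      rcases hg with rfl | rfl <;> simp [A, mul_assoc]

lemma exists_conj_eq (w : G) :
    ∃ (n : ℤ) (p : List ℤ), 0 ∉ p ∧
      w * V * w⁻¹ = A 1 ^ n * (vword p * V * (vword p)⁻¹) * A 1 ^ (-n) := by
  obtain ⟨n, p, hp, rfl | rfl⟩ := exists_normal_form w <;> refine ⟨n, p, hp, ?_⟩ <;>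
    rw [A_one_zpow, A_one_zpow, A_neg] <;> group

lemma vword_reverse_map_neg (p : List ℤ) :
    vword (p.map Neg.neg).reverse = V * (vword p)⁻¹ * V := by
  induction p with
  | nil => simp
  | cons b p ih => simp [ih, A_neg, mul_assoc]

lemma conj_vword_eq (p : List ℤ) :
    vword p * V * (vword p)⁻¹ = vword (p ++ (p.map Neg.neg).reverse) * V := by
  simp [vword_reverse_map_neg, mul_assoc]

/-! A pair `(a, l)` stands for the word `A^a * vword l`. It is reduced when every exponent in `l`
except the last is nonzero; a last exponent `0` means that the word ends with `V`. -/

def Reduced (l : List ℤ) : Prop := 0 ∉ l.dropLast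

instance : DecidablePred Reduced := fun l => inferInstanceAs (Decidable (0 ∉ l.dropLast))

lemma reduced_cons_iff {c : ℤ} {l : List ℤ} :
    Reduced (c :: l) ↔ l = [] ∨ c ≠ 0 ∧ Reduced l := by
  cases l with
  | nil => simp [Reduced]
  | cons d l => simp [Reduced, List.dropLast_cons_cons, eq_comm (a := (0 : ℤ))]

lemma Reduced.of_cons {c : ℤ} {l : List ℤ} (h : Reduced (c :: l)) : Reduced l := by
  rcases reduced_cons_iff.1 h with rfl | h
  · simp [Reduced]
  · exact h.2

lemma Reduced.cons {c : ℤ} {l : List ℤ} (hc : c ≠ 0) (h : Reduced l) : Reduced (c :: l) :=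
  reduced_cons_iff.2 (.inr ⟨hc, h⟩)

lemma Reduced.append {l l' : List ℤ} (hl : 0 ∉ l) (h : Reduced l') : Reduced (l ++ l') := by
  induction l with
  | nil => exact h
  | cons c l ih =>
    rw [List.mem_cons, not_or] at hl
    exact .cons (Ne.symm hl.1) (ih hl.2)

lemma Reduced.cons_or_eq_zero_cons {c : ℤ} {l : List ℤ} (h : Reduced l) :
    Reduced (c :: l) ∨ ∃ d l', c = 0 ∧ l = d :: l' ∧ Reduced (d :: l') := by
  cases l with
  | nil => exact .inl (reduced_cons_iff.2 (.inl rfl))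
  | cons d l' =>
    by_cases hc : c = 0
    · exact .inr ⟨d, l', hc, rfl, h⟩
    · exact .inl (.cons hc h)

def flipV : ℤ × List ℤ → ℤ × List ℤ
  | (0, []) => (0, [0])
  | (0, c :: l) => (c, l)
  | (a, l) => (0, a :: l)

lemma flipV_of_reduced {c : ℤ} {l : List ℤ} (h : Reduced (c :: l)) :
    flipV (c, l) = (0, c :: l) := by
  rcases reduced_cons_iff.1 h with rfl | ⟨hc, -⟩
  · by_cases hc : c = 0
    · subst hc; rfl
    · simp [flipV, hc]
  · simp [flipV, hc]

@[simp] lemma flipV_zero_cons (c : ℤ) (l : List ℤ) : flipV (0, c :: l) = (c, l) := rfl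

/-- Left multiplication by `V` on reduced words; pairs that are not reduced are fixed, which makes
this an involution of the whole type. -/
def permV : Equiv.Perm (ℤ × List ℤ) :=
  Function.Involutive.toPerm (fun x => if Reduced x.2 then flipV x else x) <| by
    rintro ⟨c, l⟩
    by_cases hl : Reduced l
    · rcases hl.cons_or_eq_zero_cons (c := c) with h | ⟨d, l', rfl, rfl, h⟩
      · simp [flipV_of_reduced h, h, hl]
      · simp [flipV_of_reduced h, h, h.of_cons]
    · simp [hl]

lemma permV_apply (x : ℤ × List ℤ) : permV x = if Reduced x.2 then flipV x else x := rfl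

lemma permV_mul_self : permV * permV = 1 :=
  Equiv.ext (Function.Involutive.toPerm_involutive _)

def permA : Multiplicative ℤ →* Equiv.Perm (ℤ × List ℤ) where
  toFun m := (Equiv.addRight m.toAdd).prodCongr (Equiv.refl _)
  map_one' := by ext <;> simp
  map_mul' m k := by ext <;> simp; ring

def act : G →* Equiv.Perm (ℤ × List ℤ) :=
  Coprod.lift permA (zmodPowersHom 2 permV (by rw [sq, permV_mul_self]))

@[simp] lemma act_A (n : ℤ) (x : ℤ × List ℤ) : act (A n) x = (x.1 + n, x.2) := rfl

lemma act_V : act V = permV := rfl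

lemma act_V_of_reduced {c : ℤ} {l : List ℤ} (h : Reduced (c :: l)) :
    act V (c, l) = (0, c :: l) := by
  rw [act_V, permV_apply, if_pos h.of_cons, flipV_of_reduced h]

lemma act_V_zero_cons {c : ℤ} {l : List ℤ} (h : Reduced (c :: l)) :
    act V (0, c :: l) = (c, l) := by
  rw [← act_V_of_reduced h, ← Equiv.Perm.mul_apply, ← map_mul, V_mul_V, map_one,
    Equiv.Perm.one_apply]

lemma act_vword {l l' : List ℤ} (hl : 0 ∉ l) (hl' : Reduced l') :
    act (vword l) (0, l') = (0, l ++ l') := by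
  induction l with
  | nil => simp
  | cons b l ih =>
    rw [List.mem_cons, not_or] at hl
    rw [vword_cons, map_mul, map_mul, Equiv.Perm.mul_apply, Equiv.Perm.mul_apply, ih hl.2,
      act_A, zero_add, act_V_of_reduced (.cons (Ne.symm hl.1) (.append hl.2 hl')),
      List.cons_append]

/-- With `y = vword B * V`, the pairs `(a, B ++ c₁ :: B ++ c₂ :: ⋯ ++ B ++ [cₖ])` with
`c₁, …, c_{k-1} ≠ 0`, i.e. the words `A^a y A^{c₁} y ⋯ y A^{cₖ}`. -/
def blockWords (B : List ℤ) : Set (ℤ × List ℤ) :=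
  {x | ∃ cs, Reduced cs ∧ x.2 = cs.flatMap (B ++ [·])}

lemma reduced_cons_flatMap {B : List ℤ} (hB : 0 ∉ B) {c : ℤ} {cs : List ℤ}
    (h : Reduced (c :: cs)) : Reduced (c :: cs.flatMap (B ++ [·])) := by
  induction cs generalizing c with
  | nil => simpa using h
  | cons d cs ih =>
    obtain ⟨hc, hd⟩ := (reduced_cons_iff.1 h).resolve_left (List.cons_ne_nil _ _)
    simpa using Reduced.cons hc (.append hB (ih hd))

lemma mapsTo_act_blockWords {B : List ℤ} (hB : 0 ∉ B)
    (hy : vword B * V * (vword B * V) = 1) :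
    Set.MapsTo (act (vword B * V)) (blockWords B) (blockWords B) := by
  rintro ⟨a, _⟩ ⟨cs, hcs, rfl⟩
  rcases hcs.cons_or_eq_zero_cons (c := a) with h | ⟨c, cs, rfl, rfl, h⟩
  · have hL := reduced_cons_flatMap hB h
    refine ⟨a :: cs, h, ?_⟩
    rw [map_mul, Equiv.Perm.mul_apply, act_V_of_reduced hL, act_vword hB hL]
    simp
  · -- the leading block `y` cancels: act by `y = y⁻¹ = V * (vword B)⁻¹`
    have hL := reduced_cons_flatMap hB h
    have hy_eq : vword B * V = V * (vword B)⁻¹ := by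
      rw [← inv_eq_of_mul_eq_one_right hy, mul_inv_rev, V_inv]
    have hB_cancel : act (vword B)⁻¹ (0, B ++ c :: cs.flatMap (B ++ [·])) =
        (0, c :: cs.flatMap (B ++ [·])) := by
      rw [map_inv, Equiv.Perm.inv_eq_iff_eq, act_vword hB hL]
    refine ⟨cs, h.of_cons, ?_⟩
    rw [hy_eq, map_mul, Equiv.Perm.mul_apply, List.flatMap_cons, List.append_assoc,
      List.singleton_append, hB_cancel, act_V_zero_cons hL]

lemma V_notMem_closure {B : List ℤ} (hB : B ≠ []) (hB0 : 0 ∉ B)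
    (hy : vword B * V * (vword B * V) = 1) : V ∉ Subgroup.closure {A 1, vword B * V} := by
  intro hV
  have hle : Subgroup.closure {A 1, vword B * V} ≤
      (MulAction.stabilizer (Equiv.Perm (ℤ × List ℤ)) (blockWords B)).comap act := by
    rw [Subgroup.closure_le, Set.insert_subset_iff, Set.singleton_subset_iff]
    exact ⟨MulAction.mem_stabilizer_set.2 fun x => Iff.rfl,
      Equiv.Perm.mem_stabilizer_of_mapsTo (mapsTo_act_blockWords hB0 hy)
        (by rw [← map_mul, hy, map_one])⟩
  have h := MulAction.mem_stabilizer_set.1 (hle hV) (0, [])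
  rw [Equiv.Perm.smul_def, act_V_of_reduced (by simp [Reduced])] at h
  obtain ⟨cs, -, hcs⟩ := h.2 ⟨[], by simp [Reduced], rfl⟩
  have hlen := congrArg List.length hcs
  cases cs with
  | nil => simp at hlen
  | cons c cs =>
    have := List.length_pos_of_ne_nil hB
    simp at hlen
    omega

lemma V_notMem_closure_conj {p : List ℤ} (hp : p ≠ []) (hp0 : 0 ∉ p) :
    V ∉ Subgroup.closure {A 1, vword p * V * (vword p)⁻¹} := by
  have hy : vword p * V * (vword p)⁻¹ * (vword p * V * (vword p)⁻¹) = 1 := by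
    simp [mul_assoc]
  rw [conj_vword_eq] at hy ⊢
  exact V_notMem_closure (by simp [hp]) (by simpa using hp0) hy

end IntCoprodZModTwo

open IntCoprodZModTwo in
/-- In G = ℤ ∗ ℤ/2ℤ, for w ∈ G the subgroup generated by A and w V w⁻¹ is
all of G iff w V w⁻¹ = A^n V A^{-n} for some integer n. -/
theorem stmt_10
    (A V w : Monoid.Coprod (Multiplicative ℤ) (Multiplicative (ZMod 2)))
    (hA : A = Monoid.Coprod.inl (Multiplicative.ofAdd (1 : ℤ)))
    (hV : V = Monoid.Coprod.inr (Multiplicative.ofAdd (1 : ZMod 2))) :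
    Subgroup.closure {A, w * V * w⁻¹} = ⊤ ↔
      ∃ n : ℤ, w * V * w⁻¹ = A ^ n * V * A ^ (-n) := by
  subst hA hV
  change Subgroup.closure {A 1, w * V * w⁻¹} = ⊤ ↔
    ∃ n : ℤ, w * V * w⁻¹ = A 1 ^ n * V * A 1 ^ (-n)
  constructor
  · intro htop
    obtain ⟨n, p, hp0, hw⟩ := exists_conj_eq w
    rcases eq_or_ne p [] with rfl | hp
    · exact ⟨n, by simpa using hw⟩
    refine absurd ?_ (V_notMem_closure_conj hp hp0)
    have hle : Subgroup.closure {A 1, w * V * w⁻¹} ≤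
        Subgroup.closure {A 1, vword p * V * (vword p)⁻¹} := by
      rw [Subgroup.closure_le, Set.insert_subset_iff, Set.singleton_subset_iff, hw]
      exact ⟨Subgroup.subset_closure (Set.mem_insert _ _),
        Subgroup.zpow_mul_mul_zpow_mem_closure_pair _ _ _ _⟩
    exact hle (htop ▸ Subgroup.mem_top V)
  · rintro ⟨n, hn⟩
    rw [eq_top_iff, ← closure_A_V, Subgroup.closure_le, Set.insert_subset_iff,
      Set.singleton_subset_iff]
    refine ⟨Subgroup.subset_closure (Set.mem_insert _ _), ?_⟩
    have hV : A 1 ^ (-n) * (w * V * w⁻¹) * A 1 ^ n = V := by rw [hn]; group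
    have hmem := Subgroup.zpow_mul_mul_zpow_mem_closure_pair (A 1) (w * V * w⁻¹) (-n) n
    rwa [hV] at hmem
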